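/- arXiv:1207.3564 — 5 statements merged into one kernel-verified Lean document; each statement's English description precedes it below -/
import Mathlib

section
/- Let f : [q]^d → F be symmetric, let d_1 + ... + d_r = d, and let σ_i, τ_i ∈ [q]^{d_i} for i = 1,...,r. If Peer(σ_i, f) = Peer(τ_i, f) for all i, then f(τ_1τ_2⋯τ_r) = f(σ_1σ_2⋯σ_r), where juxtaposition denotes concatenation of tuples. -/
/-- Pinning: fix the last `k` arguments of a symmetric `d`-ary function to `τ`. -/
def Pin {q d k : ℕ} {α : Type*} (h : k ≤ d) (f : (Fin d → Fin q) → α)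
    (τ : Fin k → Fin q) : (Fin (d - k) → Fin q) → α :=
  fun σ => f (fun i => if h' : (i : ℕ) < d - k then σ ⟨i, h'⟩
    else τ ⟨(i : ℕ) - (d - k), by have := i.isLt; omega⟩)

/-- Peer class of `τ`: all tuples whose pinning of `f` agrees with that of `τ`. -/
def Peer {q d k : ℕ} {α : Type*} (h : k ≤ d) (f : (Fin d → Fin q) → α)
    (τ : Fin k → Fin q) : Set (Fin k → Fin q) :=
  {σ | Pin h f σ = Pin h f τ}

/-- A function on `[q]^d` is symmetric if invariant under permutations of coordinates. -/
def Symm {q d : ℕ} {α : Type*} (f : (Fin d → Fin q) → α) : Prop :=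
  ∀ (ρ : Equiv.Perm (Fin d)) (x : Fin d → Fin q), f (x ∘ ρ) = f x

/-- `f` is `C`-regular: for every `k ≤ d` there are at most `C` distinct pinnings. -/
def CRegular {q d : ℕ} {α : Type*} (C : ℕ) (f : (Fin d → Fin q) → α) : Prop :=
  ∀ (k : ℕ) (h : k ≤ d), (Set.range (Pin h f)).ncard ≤ C

/-- Concatenation of `r` tuples of lengths `d 0, …, d (r-1)` into a single tuple
of length `∑ i, d i` (via a fixed bijection `Fin (∑ i, d i) ≃ Σ i, Fin (d i)`). -/
noncomputable def flatten {q r : ℕ} (d : Fin r → ℕ) (t : ∀ i, Fin (d i) → Fin q) :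
    Fin (∑ i, d i) → Fin q :=
  fun j =>
    let s := (Fintype.equivFinOfCardEq
      (by simp [Fintype.card_sigma] : Fintype.card (Σ i, Fin (d i)) = ∑ i, d i)).symm j
    t s.1 s.2

/-!
A symmetric `f` only sees the multiset of values of its argument. Equal peer classes of `σᵢ`
and `τᵢ` mean equal pinnings, i.e. `f (ρ σᵢ) = f (ρ τᵢ)` for every completion `ρ`. Replacing the
blocks `σᵢ` by `τᵢ` one at a time, each time taking the values of all other blocks as the
completion `ρ` and reordering by symmetry, turns `f (σ₁ ⋯ σᵣ)` into `f (τ₁ ⋯ τᵣ)`.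
-/

open Finset

def valueMultiset {β γ : Type*} [Fintype β] (x : β → γ) : Multiset γ :=
  ∑ i, {x i}

section valueMultiset

variable {β β' γ : Type*} [Fintype β] [Fintype β']

@[simp]
lemma card_valueMultiset (x : β → γ) : (valueMultiset x).card = Fintype.card β := by
  simp [valueMultiset, Multiset.card_sum]

lemma valueMultiset_comp_equiv (e : β' ≃ β) (x : β → γ) :
    valueMultiset (x ∘ e) = valueMultiset x :=
  e.sum_comp fun i => {x i}

lemma valueMultiset_sigma {ι : Type*} [Fintype ι] {κ : ι → Type*} [∀ i, Fintype (κ i)]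
    (t : ∀ i, κ i → γ) :
    valueMultiset (fun s : Σ i, κ i => t s.1 s.2) = ∑ i, valueMultiset (t i) :=
  Fintype.sum_sigma _

lemma valueMultiset_append {m n : ℕ} (a : Fin m → γ) (b : Fin n → γ) :
    valueMultiset (Fin.append a b) = valueMultiset a + valueMultiset b := by
  simp [valueMultiset, Fin.sum_univ_add]

lemma valueMultiset_eq_ofFn {n : ℕ} (x : Fin n → γ) :
    valueMultiset x = (List.ofFn x : Multiset γ) := by
  rw [← Fin.univ_val_map, ← Multiset.sum_map_singleton (univ.val.map x), Multiset.map_map]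
  rfl

lemma exists_valueMultiset_eq {n : ℕ} (m : Multiset γ) (hm : m.card = n) :
    ∃ x : Fin n → γ, valueMultiset x = m := by
  obtain ⟨l, rfl⟩ : ∃ l : List γ, (l : Multiset γ) = m := Quot.exists_rep m
  rw [Multiset.coe_card] at hm
  subst hm
  exact ⟨l.get, by rw [valueMultiset_eq_ofFn, List.ofFn_get]⟩

end valueMultiset

lemma valueMultiset_flatten {q r : ℕ} (d : Fin r → ℕ) (t : ∀ i, Fin (d i) → Fin q) :
    valueMultiset (flatten d t) = ∑ i, valueMultiset (t i) :=
  (valueMultiset_comp_equiv _ _).trans (valueMultiset_sigma t)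

lemma valueMultiset_dite_lt {γ : Type*} {n k : ℕ} (h : k ≤ n) (ρ : Fin (n - k) → γ)
    (τ : Fin k → γ) :
    valueMultiset (fun i : Fin n => if h' : (i : ℕ) < n - k then ρ ⟨i, h'⟩
      else τ ⟨(i : ℕ) - (n - k), by have := i.isLt; omega⟩) =
      valueMultiset ρ + valueMultiset τ := by
  rw [← valueMultiset_append, ← valueMultiset_comp_equiv (finCongr (by omega : n = n - k + k))]
  congr 1
  funext i
  simp only [Function.comp_apply, Fin.append, Fin.addCases, finCongr_apply, Fin.val_cast,
    eq_rec_constant]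
  split_ifs <;> rfl

lemma peer_eq_peer_iff {q n k : ℕ} {α : Type*} (h : k ≤ n) (f : (Fin n → Fin q) → α)
    (σ τ : Fin k → Fin q) : Peer h f σ = Peer h f τ ↔ Pin h f σ = Pin h f τ := by
  refine ⟨fun hpeer => ?_, fun hpin => ?_⟩
  · show σ ∈ Peer h f τ
    exact hpeer ▸ rfl
  · ext ρ
    simp only [Peer, Set.mem_ofPred_eq, hpin]

namespace Symm

variable {q n : ℕ} {α : Type*} {f : (Fin n → Fin q) → α}

lemma apply_eq_of_valueMultiset_eq (hf : Symm f) {x y : Fin n → Fin q}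
    (h : valueMultiset x = valueMultiset y) : f x = f y := by
  have hperm : (List.ofFn x).Perm (List.ofFn y) := by
    rw [← Multiset.coe_eq_coe, ← valueMultiset_eq_ofFn, ← valueMultiset_eq_ofFn, h]
  have hsorted : x ∘ Tuple.sort x = y ∘ Tuple.sort y :=
    List.ofFn_injective <| List.Perm.eq_of_pairwise'
      (Tuple.monotone_sort x).sortedLE_ofFn.pairwise
      (Tuple.monotone_sort y).sortedLE_ofFn.pairwise
      (((Tuple.sort x).ofFn_comp_perm x).trans
        (hperm.trans ((Tuple.sort y).ofFn_comp_perm y).symm))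
  calc f x = f (x ∘ Tuple.sort x) := (hf _ x).symm
    _ = f (y ∘ Tuple.sort y) := by rw [hsorted]
    _ = f y := hf _ y

lemma pin_apply_eq (hf : Symm f) {k : ℕ} (h : k ≤ n) (τ : Fin k → Fin q)
    (ρ : Fin (n - k) → Fin q) {x : Fin n → Fin q}
    (hx : valueMultiset x = valueMultiset ρ + valueMultiset τ) : Pin h f τ ρ = f x :=
  hf.apply_eq_of_valueMultiset_eq ((valueMultiset_dite_lt h ρ τ).trans hx.symm)

lemma apply_eq_of_pin_eq (hf : Symm f) {k : ℕ} (h : k ≤ n) {σ τ : Fin k → Fin q}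
    (hpin : Pin h f σ = Pin h f τ) (m : Multiset (Fin q)) {x y : Fin n → Fin q}
    (hx : valueMultiset x = m + valueMultiset σ) (hy : valueMultiset y = m + valueMultiset τ) :
    f x = f y := by
  have hcard := congrArg Multiset.card hx
  simp only [card_valueMultiset, Fintype.card_fin, Multiset.card_add] at hcard
  obtain ⟨ρ, rfl⟩ := exists_valueMultiset_eq (n := n - k) m (by omega)
  calc f x = Pin h f σ ρ := (hf.pin_apply_eq h σ ρ hx).symm
    _ = Pin h f τ ρ := congrFun hpin ρ
    _ = f y := hf.pin_apply_eq h τ ρ hy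

lemma apply_eq_of_forall_pin_eq (hf : Symm f) {ι : Type*} {d : ι → ℕ} (hd : ∀ i, d i ≤ n)
    {σ τ : ∀ i, Fin (d i) → Fin q} (hpin : ∀ i, Pin (hd i) f (σ i) = Pin (hd i) f (τ i))
    (s : Finset ι) (c : Multiset (Fin q)) {x y : Fin n → Fin q}
    (hx : valueMultiset x = c + ∑ i ∈ s, valueMultiset (σ i))
    (hy : valueMultiset y = c + ∑ i ∈ s, valueMultiset (τ i)) : f x = f y := by
  induction s using Finset.cons_induction generalizing c x with
  | empty => exact hf.apply_eq_of_valueMultiset_eq (by rw [hx, hy, sum_empty, sum_empty])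
  | cons a s ha ih =>
    rw [sum_cons] at hx hy
    have hcard := congrArg Multiset.card hx
    simp only [card_valueMultiset, Fintype.card_fin, Multiset.card_add] at hcard
    obtain ⟨z, hz⟩ := exists_valueMultiset_eq (n := n)
      (c + valueMultiset (τ a) + ∑ i ∈ s, valueMultiset (σ i))
      (by simp only [card_valueMultiset, Fintype.card_fin, Multiset.card_add]; omega)
    calc f x = f z := hf.apply_eq_of_pin_eq (hd a) (hpin a) (c + ∑ i ∈ s, valueMultiset (σ i))
          (by rw [hx]; abel) (by rw [hz]; abel)
      _ = f y := ih _ hz (by rw [hy, add_assoc])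

end Symm

theorem stmt_1 {q r : ℕ} {α : Type*} (d : Fin r → ℕ)
    (f : (Fin (∑ i, d i) → Fin q) → α) (hf : Symm f)
    (σ τ : ∀ i, Fin (d i) → Fin q)
    (hpeer : ∀ i : Fin r,
      Peer (Finset.single_le_sum (fun j _ => Nat.zero_le (d j)) (Finset.mem_univ i)) f (σ i)
      = Peer (Finset.single_le_sum (fun j _ => Nat.zero_le (d j)) (Finset.mem_univ i)) f (τ i)) :
    f (flatten d τ) = f (flatten d σ) := by
  have hd (i : Fin r) : d i ≤ ∑ j, d j := single_le_sum (fun j _ => Nat.zero_le (d j)) (mem_univ i)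
  have hpin (i : Fin r) : Pin (hd i) f (τ i) = Pin (hd i) f (σ i) :=
    ((peer_eq_peer_iff _ f _ _).mp (hpeer i)).symm
  exact hf.apply_eq_of_forall_pin_eq hd hpin univ 0
    (by rw [zero_add, valueMultiset_flatten]) (by rw [zero_add, valueMultiset_flatten])
end

section
/- Let f : [q]^d → F be a C-regular symmetric function and τ ∈ [q]^k. Then the boolean symmetric function Peer(τ, f) : [q]^k → {0,1} is also C-regular, i.e., for every 0 ≤ ℓ ≤ k, the number of distinct pinnings {Pin(σ, Peer(τ,f)) : σ ∈ [q]^ℓ} is at most C. -/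
theorem stmt_7 {q d k C : ℕ} {α : Type*} (h : k ≤ d)
    (f : (Fin d → Fin q) → α) (hf : Symm f) (hreg : CRegular C f)
    (τ : Fin k → Fin q) :
    CRegular C (fun x => x ∈ Peer h f τ) := by
  intro ℓ hℓ
  have hℓd : ℓ ≤ d := hℓ.trans h
  set F : ((Fin (d - ℓ) → Fin q) → α) → (Fin (k - ℓ) → Fin q) → Prop :=
    fun g ρ => (fun x : Fin (d - k) → Fin q =>
      g (fun i => if h' : (i : ℕ) < d - k then x ⟨i, h'⟩
        else ρ ⟨(i : ℕ) - (d - k), by have := i.isLt; omega⟩)) = Pin h f τ with hF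
  have key : Pin hℓ (fun x => x ∈ Peer h f τ) = F ∘ (Pin hℓd f) := by
    funext σ ρ
    show (Pin h f _ = Pin h f τ) = _
    simp only [hF, Function.comp]
    congr 1
    funext x
    show f _ = f _
    congr 1
    funext i
    by_cases h1 : (i : ℕ) < d - k
    · simp only [dif_pos h1, dif_pos (show (i:ℕ) < d - ℓ by omega)]
    · simp only [dif_neg h1]
      by_cases h2 : (i : ℕ) < d - ℓ
      · simp only [dif_pos h2, dif_pos (show (i:ℕ) - (d-k) < k - ℓ by omega)]
      · simp only [dif_neg h2]
        rw [dif_neg (show ¬ ((i:ℕ) - (d-k) < k - ℓ) by omega)]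
        congr 1
        ext
        simp
        omega
  rw [key, Set.range_comp]
  calc (F '' Set.range (Pin hℓd f)).ncard ≤ (Set.range (Pin hℓd f)).ncard :=
        Set.ncard_image_le (Set.finite_range _)
    _ ≤ C := hreg ℓ hℓd
end

section
/- Let f : [q]^d → F be symmetric and 0 ≤ k ≤ d. Every k-ary function g in the peering closure Peer*(f) can be written as a finite union g = Peer(σ_1,f) ∪ ⋯ ∪ Peer(σ_t,f) for some σ_1,...,σ_t ∈ [q]^k (union of boolean functions, i.e. of subsets of [q]^k). -/
/-- The peering closure of `f`: all (Prop-valued) functions obtained by iterated peering. -/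
inductive PeerStar {q d : ℕ} {α : Type*} (f : (Fin d → Fin q) → α) :
    (k : ℕ) → ((Fin k → Fin q) → Prop) → Prop where
  | base {k : ℕ} (h : k ≤ d) (τ : Fin k → Fin q) :
      PeerStar f k (fun σ => σ ∈ Peer h f τ)
  | step {k : ℕ} {g : (Fin k → Fin q) → Prop} (hg : PeerStar f k g)
      {m : ℕ} (h : m ≤ k) (τ : Fin m → Fin q) :
      PeerStar f m (fun σ => σ ∈ Peer h g τ)

lemma peerStar_le {q d : ℕ} {α : Type*} {f : (Fin d → Fin q) → α}
    {k : ℕ} {g : (Fin k → Fin q) → Prop} (hg : PeerStar f k g) : k ≤ d := by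
  induction hg with
  | base h τ => exact h
  | step hg h τ ih => exact h.trans ih

lemma pin_congr {q d m k' : ℕ} {α : Type*} (f : (Fin d → Fin q) → α)
    (h : m ≤ k') (hk' : k' ≤ d)
    (g : (Fin k' → Fin q) → Prop)
    (hgU : ∀ x y : Fin k' → Fin q, Pin hk' f x = Pin hk' f y → (g x ↔ g y))
    {σ σ' : Fin m → Fin q} (hσ : Pin (h.trans hk') f σ = Pin (h.trans hk') f σ') :
    Pin h g σ = Pin h g σ' := by
  funext ρ
  apply propext
  show g _ ↔ g _
  apply hgU
  funext x
  have key : ∀ σ0 : Fin m → Fin q,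
      (fun j : Fin d => if h2 : (j : ℕ) < d - k' then x ⟨j, h2⟩
        else (fun i : Fin k' => if h' : (i : ℕ) < k' - m then ρ ⟨i, h'⟩
          else σ0 ⟨(i : ℕ) - (k' - m), by have := i.isLt; omega⟩)
          ⟨(j : ℕ) - (d - k'), by have := j.isLt; omega⟩)
      = (fun j : Fin d => if h2 : (j : ℕ) < d - m then
          (fun i : Fin (d - m) => if h' : (i : ℕ) < d - k' then x ⟨i, h'⟩
            else ρ ⟨(i : ℕ) - (d - k'), by have := i.isLt; omega⟩) ⟨j, h2⟩
          else σ0 ⟨(j : ℕ) - (d - m), by have := j.isLt; omega⟩) := by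
    intro σ0
    funext j
    by_cases h1 : (j : ℕ) < d - k'
    · rw [dif_pos h1, dif_pos (show (j : ℕ) < d - m by omega)]
      simp only
      rw [dif_pos h1]
    · rw [dif_neg h1]
      by_cases h2 : (j : ℕ) < d - m
      · rw [dif_pos h2]
        simp only
        rw [dif_neg h1, dif_pos (show (j : ℕ) - (d - k') < k' - m by omega)]
      · rw [dif_neg h2]
        simp only
        rw [dif_neg (show ¬ ((j : ℕ) - (d - k') < k' - m) by omega)]
        congr 1
        simp only [Fin.mk.injEq]
        omega
  let y : Fin (d - m) → Fin q := fun i =>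
    if h' : (i : ℕ) < d - k' then x ⟨i, h'⟩
    else ρ ⟨(i : ℕ) - (d - k'), by have := i.isLt; omega⟩
  exact (congrArg f (key σ)).trans ((congrFun hσ y).trans (congrArg f (key σ')).symm)

lemma stmt_8_aux {q d : ℕ} {α : Type*} (f : (Fin d → Fin q) → α)
    {k : ℕ} {g : (Fin k → Fin q) → Prop} (hg : PeerStar f k g) :
    ∀ hk : k ≤ d, ∃ (t : ℕ) (σs : Fin t → (Fin k → Fin q)), 0 < t ∧
      g = fun x => ∃ i : Fin t, x ∈ Peer hk f (σs i) := by
  induction hg with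
  | base h τ =>
    intro hk
    refine ⟨1, fun _ => τ, one_pos, ?_⟩
    funext x
    apply propext
    exact ⟨fun hx => ⟨0, hx⟩, fun ⟨i, hi⟩ => hi⟩
  | @step k' g' hg' m h τ ih =>
    intro hk
    have hk' : k' ≤ d := peerStar_le hg'
    obtain ⟨t, σs, ht, hrep⟩ := ih hk'
    have hgU : ∀ x y : Fin k' → Fin q, Pin hk' f x = Pin hk' f y → (g' x ↔ g' y) := by
      intro x y hxy
      rw [hrep]
      simp only [Peer, Set.mem_setOf_eq]
      constructor
      · rintro ⟨i, hi⟩; exact ⟨i, hxy ▸ hi⟩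
      · rintro ⟨i, hi⟩; exact ⟨i, hxy.trans hi⟩
    have key : ∀ x y : Fin m → Fin q, Pin hk f x = Pin hk f y →
        Pin h g' x = Pin h g' y := fun x y hxy => pin_congr f h hk' g' hgU hxy
    classical
    haveI : Nonempty (Fin m → Fin q) := ⟨τ⟩
    set n := Fintype.card (Fin m → Fin q) with hn
    let e : Fin n ≃ (Fin m → Fin q) := (Fintype.equivFin _).symm
    let σs' : Fin n → (Fin m → Fin q) :=
      fun i => if Pin h g' (e i) = Pin h g' τ then e i else τ
    refine ⟨n, σs', Fintype.card_pos, ?_⟩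
    funext x
    apply propext
    have hmem : ∀ i, Pin h g' (σs' i) = Pin h g' τ := by
      intro i
      by_cases hc : Pin h g' (e i) = Pin h g' τ
      · simp only [σs', if_pos hc]; exact hc
      · simp only [σs', if_neg hc]
    constructor
    · intro hx
      have hx' : Pin h g' x = Pin h g' τ := hx
      refine ⟨e.symm x, ?_⟩
      show Pin hk f x = Pin hk f (σs' (e.symm x))
      have : σs' (e.symm x) = x := by
        simp only [σs', Equiv.apply_symm_apply, if_pos hx']
      rw [this]
    · rintro ⟨i, hi⟩
      have hi' : Pin hk f x = Pin hk f (σs' i) := hi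
      show Pin h g' x = Pin h g' τ
      exact (key x (σs' i) hi').trans (hmem i)

theorem stmt_8 {q d k : ℕ} {α : Type*}
    (f : (Fin d → Fin q) → α) (hf : Symm f) (hk : k ≤ d)
    (g : (Fin k → Fin q) → Prop) (hg : PeerStar f k g) :
    ∃ (t : ℕ) (σs : Fin t → (Fin k → Fin q)), 0 < t ∧
      g = fun x => ∃ i : Fin t, x ∈ Peer hk f (σs i) := by
  exact stmt_8_aux f hg hk
end

section
/- Let mw(G) denote the minimum width over all separator decompositions of G and tw(G) the treewidth of G. Then mw(G) ≤ 3·tw(G) + 3. -/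
/-- A full binary tree with a label at every node. -/
inductive BTree (β : Type*) where
  | leaf (b : β)
  | node (b : β) (l r : BTree β)

/-- The label at the root. -/
def BTree.label {β : Type*} : BTree β → β
  | .leaf b => b
  | .node b _ _ => b

/-- Number of nodes (leaves included). -/
def BTree.size {β : Type*} : BTree β → ℕ
  | .leaf _ => 1
  | .node _ l r => 1 + l.size + r.size

/-- `Subtree s t`: `s` occurs as a (rooted) subtree of `t`. -/
inductive BTree.Subtree {β : Type*} : BTree β → BTree β → Prop where
  | refl (t : BTree β) : BTree.Subtree t t
  | left {s : BTree β} {b : β} {l r : BTree β} :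
      BTree.Subtree s l → BTree.Subtree s (.node b l r)
  | right {s : BTree β} {b : β} {l r : BTree β} :
      BTree.Subtree s r → BTree.Subtree s (.node b l r)

/-- Vertex boundary of `R` in `G`. -/
def vBoundary {V : Type*} (G : SimpleGraph V) (R : Set V) : Set V :=
  {v | v ∉ R ∧ ∃ u ∈ R, G.Adj u v}

/-- A separator decomposition of `G`: each node carries `(Vᵢ, Sᵢ)`; leaves carry
`(∅, ∅)`; at an internal node, `{V_j, V_k, Sᵢ}` partitions `Vᵢ` with no edge of
`G[Vᵢ]` between `V_j` and `V_k`.  (The root condition `V_r = V` is stated separately.) -/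
def IsSepDecomp {V : Type*} (G : SimpleGraph V) : BTree (Set V × Set V) → Prop
  | .leaf b => b.1 = ∅ ∧ b.2 = ∅
  | .node b l r =>
      IsSepDecomp G l ∧ IsSepDecomp G r ∧
      l.label.1 ∪ r.label.1 ∪ b.2 = b.1 ∧
      Disjoint l.label.1 r.label.1 ∧ Disjoint l.label.1 b.2 ∧ Disjoint r.label.1 b.2 ∧
      ∀ u ∈ l.label.1, ∀ v ∈ r.label.1, ¬ G.Adj u v

/-- The decomposition has width at most `s`: at every node, `|∂Vᵢ| ≤ s` and `|Sᵢ| ≤ s`. -/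
def WidthLE {V : Type*} (G : SimpleGraph V) (s : ℕ) : BTree (Set V × Set V) → Prop
  | .leaf b => (vBoundary G b.1).ncard ≤ s ∧ b.2.ncard ≤ s
  | .node b l r => (vBoundary G b.1).ncard ≤ s ∧ b.2.ncard ≤ s ∧
      WidthLE G s l ∧ WidthLE G s r

/-- `S` meets every walk from `X` to `Y`: `X` and `Y` are disconnected in `G[V ∖ S]`. -/
def SeparatesPaths {V : Type*} (G : SimpleGraph V) (S X Y : Set V) : Prop :=
  ∀ x ∈ X, ∀ y ∈ Y, ∀ p : G.Walk x y, ∃ v ∈ p.support, v ∈ S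

/-- `S` is a balanced `W`-separator of `G`. -/
def IsBalancedSep {V : Type*} (G : SimpleGraph V) (W S : Set V) : Prop :=
  ∃ X Y : Set V, X.Nonempty ∧ Y.Nonempty ∧ Disjoint X Y ∧ X ∪ Y = W \ S ∧
    3 * X.ncard ≤ 2 * W.ncard ∧ 3 * Y.ncard ≤ 2 * W.ncard ∧
    SeparatesPaths G S X Y

/-- A tree decomposition of `G`: a tree `T` on index type `ι` with bags `bag i ⊆ V`
covering all vertices and edges, such that for each vertex the set of bags
containing it induces a connected subgraph of `T`. -/
structure TreeDecomp {V : Type*} (G : SimpleGraph V) where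
  ι : Type
  T : SimpleGraph ι
  connected : T.Connected
  acyclic : T.IsAcyclic
  bag : ι → Set V
  covers : ∀ v : V, ∃ i, v ∈ bag i
  coversEdges : ∀ u v : V, G.Adj u v → ∃ i, u ∈ bag i ∧ v ∈ bag i
  subtreeConn : ∀ v : V, (T.induce {i | v ∈ bag i}).Connected


section Avoid
variable {ι : Type} (T : SimpleGraph ι)

/-- `a` and `b` are connected in `T` by a walk avoiding `i`. -/
def Avoid (i a b : ι) : Prop := ∃ w : T.Walk a b, i ∉ w.support

variable {T}

lemma Avoid.ne_left {i a b : ι} (h : Avoid T i a b) : a ≠ i := by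
  obtain ⟨w, hw⟩ := h
  rintro rfl; exact hw w.start_mem_support

lemma Avoid.ne_right {i a b : ι} (h : Avoid T i a b) : b ≠ i := by
  obtain ⟨w, hw⟩ := h
  rintro rfl; exact hw w.end_mem_support

lemma avoid_refl {i a : ι} (h : a ≠ i) : Avoid T i a a :=
  ⟨.nil, by simpa using fun h' => h h'.symm⟩

lemma Avoid.symm {i a b : ι} (h : Avoid T i a b) : Avoid T i b a := by
  obtain ⟨w, hw⟩ := h
  exact ⟨w.reverse, by simpa using hw⟩

lemma Avoid.trans {i a b c : ι} (h : Avoid T i a b) (h' : Avoid T i b c) :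
    Avoid T i a c := by
  obtain ⟨w, hw⟩ := h; obtain ⟨w', hw'⟩ := h'
  exact ⟨w.append w', by
    intro hmem
    rcases (SimpleGraph.Walk.mem_support_append_iff _ _).mp hmem with h1 | h1
    · exact hw h1
    · exact hw' h1⟩

lemma avoid_of_walk {i a b : ι} (w : T.Walk a b) (hw : ∀ x ∈ w.support, x ≠ i) :
    Avoid T i a b := ⟨w, fun h => hw i h rfl⟩

/-- From any walk ending at `i` (starting elsewhere) we can extract a neighbor `c`
of `i` on the walk with `c` connected to the start avoiding `i`. -/
lemma exists_nbr_of_walk : ∀ {b i : ι} (q : T.Walk b i), b ≠ i →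
    ∃ c, T.Adj i c ∧ c ∈ q.support ∧ Avoid T i c b := by
  intro b i q
  induction q with
  | nil => intro h; exact absurd rfl h
  | @cons u x w h q' ih =>
    intro hu
    by_cases hx : x = w
    · subst hx
      exact ⟨u, h.symm, by simp, avoid_refl hu⟩
    · obtain ⟨c, hc1, hc2, hc3⟩ := ih hx
      refine ⟨c, hc1, by simp [hc2], hc3.trans ?_⟩
      refine ⟨(SimpleGraph.Walk.cons h .nil).reverse, ?_⟩
      simp only [SimpleGraph.Walk.support_reverse, SimpleGraph.Walk.support_cons,
        SimpleGraph.Walk.support_nil, List.mem_reverse, List.mem_cons]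
      push_neg
      exact ⟨Ne.symm hu, Ne.symm hx, by simp⟩

/-- In an acyclic graph, the neighbor of `i` through which one can reach `t`
avoiding `i` is unique. -/
lemma nbr_unique (hac : T.IsAcyclic) {i t c₁ c₂ : ι}
    (h₁ : T.Adj i c₁) (h₂ : T.Adj i c₂)
    (a₁ : Avoid T i c₁ t) (a₂ : Avoid T i c₂ t) : c₁ = c₂ := by
  classical
  obtain ⟨w₁, hw₁⟩ := a₁
  obtain ⟨w₂, hw₂⟩ := a₂
  have hb₁ : i ∉ w₁.bypass.support := fun h => hw₁ (w₁.support_bypass_subset h)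
  have hb₂ : i ∉ w₂.bypass.support := fun h => hw₂ (w₂.support_bypass_subset h)
  have e := hac.path_unique ⟨.cons h₁ w₁.bypass, w₁.bypass_isPath.cons hb₁⟩
    ⟨.cons h₂ w₂.bypass, w₂.bypass_isPath.cons hb₂⟩
  have h2 := congrArg (fun p : T.Path i t => (p : T.Walk i t).getVert 1) e
  simpa [SimpleGraph.Walk.getVert_cons_succ, SimpleGraph.Walk.getVert_zero] using h2

/-- Step towards `t`: a neighbor `c` of `i` with `Avoid i c t` and smaller distance. -/
lemma step_toward (hconn : T.Connected) {i t : ι} (hne : i ≠ t) :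
    ∃ c, T.Adj i c ∧ Avoid T i c t ∧ T.dist c t < T.dist i t := by
  classical
  obtain ⟨p, hp⟩ := hconn.exists_walk_length_eq_dist i t
  cases p with
  | nil => exact absurd rfl hne
  | @cons _ c _ h q =>
    refine ⟨c, h, ⟨q, fun hmem => ?_⟩, ?_⟩
    · have : T.dist i t ≤ (q.dropUntil i hmem).length :=
        SimpleGraph.dist_le _
      have h2 : (q.dropUntil i hmem).length ≤ q.length :=
        SimpleGraph.Walk.length_dropUntil_le q hmem
      simp only [SimpleGraph.Walk.length_cons] at hp
      omega
    · have : T.dist c t ≤ q.length := SimpleGraph.dist_le q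
      simp only [SimpleGraph.Walk.length_cons] at hp
      omega

end Avoid

section TD
variable {V : Type} {G : SimpleGraph V} (td : TreeDecomp G)

/-- A walk between two bags containing `v`, all of whose bags contain `v`. -/
lemma subtree_walk (v : V) {a b : td.ι} (ha : v ∈ td.bag a) (hb : v ∈ td.bag b) :
    ∃ w : td.T.Walk a b, ∀ x ∈ w.support, v ∈ td.bag x := by
  have hc := td.subtreeConn v
  have hr := hc ⟨a, ha⟩ ⟨b, hb⟩
  obtain ⟨p⟩ := hr
  let f : td.T.induce {i | v ∈ td.bag i} →g td.T :=
    ⟨Subtype.val, fun h => h⟩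
  refine ⟨p.map f, ?_⟩
  intro x hx
  rw [SimpleGraph.Walk.support_map, List.mem_map] at hx
  obtain ⟨⟨y, hy⟩, _, rfl⟩ := hx
  exact hy

lemma bag_avoid (v : V) {i a b : td.ι} (ha : v ∈ td.bag a) (hb : v ∈ td.bag b)
    (hi : v ∉ td.bag i) : Avoid td.T i a b := by
  obtain ⟨w, hw⟩ := subtree_walk td v ha hb
  exact avoid_of_walk w fun x hx hxi => hi (hxi ▸ hw x hx)

/-- Key lemma: if `w` lies in `bag i` and in a bag `b` that can reach `t`
avoiding `i`, then `w` lies in the bag of the unique neighbor `c` of `i`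
towards `t`. -/
lemma key_mem (w : V) {i t c b : td.ι} (hwi : w ∈ td.bag i)
    (hadj : td.T.Adj i c) (hct : Avoid td.T i c t)
    (hwb : w ∈ td.bag b) (hbt : Avoid td.T i b t) : w ∈ td.bag c := by
  obtain ⟨q, hq⟩ := subtree_walk td w hwb hwi
  obtain ⟨c', h1, h2, h3⟩ := exists_nbr_of_walk q hbt.ne_left
  have : c' = c := nbr_unique td.acyclic h1 hadj (h3.trans hbt) hct
  exact this ▸ hq c' h2

end TD

section Build
variable {V : Type} {G : SimpleGraph V}

/-- There is a separator decomposition of width `3k+3` rooted at `A`. -/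
def GoodDecomp (G : SimpleGraph V) (k : ℕ) (A : Set V) : Prop :=
  ∃ t : BTree (Set V × Set V), IsSepDecomp G t ∧ t.label.1 = A ∧ WidthLE G (3 * k + 3) t

lemma vBoundary_empty : vBoundary G (∅ : Set V) = ∅ := by
  ext x; simp [vBoundary]

lemma good_empty (k : ℕ) : GoodDecomp G k ∅ :=
  ⟨.leaf (∅, ∅), ⟨rfl, rfl⟩, rfl, ⟨by simp [vBoundary_empty], by simp⟩⟩

lemma good_node {k : ℕ} {A S A1 A2 : Set V} (h1 : GoodDecomp G k A1) (h2 : GoodDecomp G k A2)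
    (hu : A1 ∪ A2 ∪ S = A) (d12 : Disjoint A1 A2) (d1S : Disjoint A1 S) (d2S : Disjoint A2 S)
    (he : ∀ u ∈ A1, ∀ v ∈ A2, ¬ G.Adj u v)
    (hb : (vBoundary G A).ncard ≤ 3 * k + 3) (hS : S.ncard ≤ 3 * k + 3) :
    GoodDecomp G k A := by
  obtain ⟨t1, hs1, hl1, hw1⟩ := h1
  obtain ⟨t2, hs2, hl2, hw2⟩ := h2
  refine ⟨.node (A, S) t1 t2, ?_, rfl, ?_⟩
  · exact ⟨hs1, hs2, by rw [hl1, hl2]; exact hu, by rw [hl1, hl2]; exact d12,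
      by rw [hl1]; exact d1S, by rw [hl2]; exact d2S, by rw [hl1, hl2]; exact he⟩
  · exact ⟨hb, hS, hw1, hw2⟩

lemma build [Fintype V] (td : TreeDecomp G) (k : ℕ)
    (hbag : ∀ i, (td.bag i).ncard ≤ k + 1) :
    ∀ (N : ℕ) (A : Set V) (i j : td.ι), A.ncard ≤ N →
      vBoundary G A ⊆ td.bag i ∪ td.bag j → GoodDecomp G k A := by
  have cardb : ∀ (s : Set V) (i' j' : td.ι), s ⊆ td.bag i' ∪ td.bag j' →
      s.ncard ≤ 3 * k + 3 := by
    intro s i' j' hs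
    have h1 : s.ncard ≤ (td.bag i' ∪ td.bag j').ncard :=
      Set.ncard_le_ncard hs (Set.toFinite _)
    have h2 := Set.ncard_union_le (td.bag i') (td.bag j')
    have h3 := hbag i'
    have h4 := hbag j'
    omega
  intro N
  induction N with
  | zero =>
    intro A i j hA _
    have : A = ∅ := (Set.ncard_eq_zero (Set.toFinite A)).mp (Nat.le_zero.mp hA)
    rw [this]; exact good_empty k
  | succ N IH =>
    intro A i j hA hbound
    by_cases hAe : A = ∅
    · rw [hAe]; exact good_empty k
    obtain ⟨u₀, hu₀⟩ := Set.nonempty_iff_ne_empty.mpr hAe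
    obtain ⟨n₀, hn₀⟩ := td.covers u₀
    have IH' : ∀ (A' : Set V) (i' j' : td.ι), A' ⊂ A →
        vBoundary G A' ⊆ td.bag i' ∪ td.bag j' → GoodDecomp G k A' := by
      intro A' i' j' hss hb'
      have h1 := Set.ncard_lt_ncard hss (Set.toFinite A)
      exact IH A' i' j' (by omega) hb'
    -- single-bag boundary case
    have SINGLE : ∀ (d2 : ℕ) (i : td.ι), td.T.dist i n₀ ≤ d2 → A ∩ td.bag i = ∅ →
        vBoundary G A ⊆ td.bag i → GoodDecomp G k A := by
      intro d2
      induction d2 with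
      | zero =>
        intro i hd hAi _
        have hne : i ≠ n₀ := by
          rintro rfl
          exact (Set.eq_empty_iff_forall_notMem.mp hAi u₀) ⟨hu₀, hn₀⟩
        exact absurd ((td.connected.dist_eq_zero_iff).mp (Nat.le_zero.mp hd)) hne
      | succ d2 ihd =>
        intro i hd hAi hbd
        have hnotbag : ∀ u ∈ A, u ∉ td.bag i := fun u hu hb =>
          (Set.eq_empty_iff_forall_notMem.mp hAi u) ⟨hu, hb⟩
        have hne : i ≠ n₀ := fun h => hnotbag u₀ hu₀ (h ▸ hn₀)
        set AK : Set V := {u | u ∈ A ∧ ∃ b, u ∈ td.bag b ∧ Avoid td.T i b n₀} with hAKdef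
        have hKsub : AK ⊆ A := fun u hu => hu.1
        have htrans : ∀ u ∈ AK, ∀ b, u ∈ td.bag b → Avoid td.T i b n₀ := by
          intro u hu b hb
          obtain ⟨huA, b₀, hb₀, hav⟩ := hu
          exact (bag_avoid td u hb hb₀ (hnotbag u huA)).trans hav
        have hedge : ∀ u ∈ AK, ∀ v ∈ A \ AK, ¬ G.Adj u v := by
          intro u hu v hv hadj
          obtain ⟨b, hub, hvb⟩ := td.coversEdges u v hadj
          exact hv.2 ⟨hv.1, b, hvb, htrans u hu b hub⟩
        have hu₀K : u₀ ∈ AK := ⟨hu₀, n₀, hn₀, avoid_refl (Ne.symm hne)⟩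
        by_cases hrest : A \ AK = ∅
        · -- AK = A : move the bag towards n₀
          have hAKA : AK = A := subset_antisymm hKsub fun u hu => by
            by_contra h
            exact (Set.eq_empty_iff_forall_notMem.mp hrest u) ⟨hu, h⟩
          obtain ⟨c, hc_adj, hc_av, hc_lt⟩ := step_toward td.connected hne
          have hbc : vBoundary G A ⊆ td.bag c := by
            intro w hw
            obtain ⟨hwA, u, huA, hadj⟩ := hw
            have hwi : w ∈ td.bag i := hbd ⟨hwA, u, huA, hadj⟩
            obtain ⟨b, hub, hwb⟩ := td.coversEdges u w hadj
            exact key_mem td w hwi hc_adj hc_av hwb (htrans u (hAKA ▸ huA) b hub)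
          by_cases hcm : td.bag c ∩ A = ∅
          · exact ihd c (by omega) (by rw [Set.inter_comm]; exact hcm) hbc
          · -- nonempty separator `bag c ∩ A`
            obtain ⟨x, hx⟩ := Set.nonempty_iff_ne_empty.mpr hcm
            have hss : A \ td.bag c ⊂ A :=
              (Set.ssubset_iff_of_subset Set.diff_subset).mpr ⟨x, hx.2, fun h => h.2 hx.1⟩
            have hchild := IH' (A \ td.bag c) c c hss (by
              intro w hw
              obtain ⟨hwA, u, huA, hadj⟩ := hw
              by_cases hw2 : w ∈ A
              · exact Or.inl (by by_contra h; exact hwA ⟨hw2, h⟩)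
              · exact Or.inl (hbc ⟨hw2, u, huA.1, hadj⟩))
            refine good_node (S := A ∩ td.bag c) hchild (good_empty k) ?_ ?_ ?_ ?_ ?_ ?_ ?_
            · rw [Set.union_empty]
              exact Set.diff_union_inter A (td.bag c)
            · simp
            · exact Set.disjoint_left.mpr fun a ha h => ha.2 h.2
            · simp
            · intro u _ v hv; simp at hv
            · exact cardb _ c c fun w hw => Or.inl (hbc hw)
            · exact cardb _ c c fun w hw => Or.inl hw.2
        · -- both parts nonempty : split
          obtain ⟨y, hy⟩ := Set.nonempty_iff_ne_empty.mpr hrest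
          have hss1 : AK ⊂ A :=
            (Set.ssubset_iff_of_subset hKsub).mpr ⟨y, hy.1, hy.2⟩
          have hss2 : A \ AK ⊂ A :=
            (Set.ssubset_iff_of_subset Set.diff_subset).mpr ⟨u₀, hu₀, fun h => h.2 hu₀K⟩
          have hb1 : vBoundary G AK ⊆ td.bag i ∪ td.bag i := by
            intro w hw
            obtain ⟨hwA, u, huA, hadj⟩ := hw
            by_cases hw2 : w ∈ A
            · exact absurd hadj (hedge u huA w ⟨hw2, hwA⟩)
            · exact Or.inl (hbd ⟨hw2, u, hKsub huA, hadj⟩)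
          have hb2 : vBoundary G (A \ AK) ⊆ td.bag i ∪ td.bag i := by
            intro w hw
            obtain ⟨hwA, u, huA, hadj⟩ := hw
            by_cases hw2 : w ∈ A
            · have hwK : w ∈ AK := by
                by_contra h
                exact hwA ⟨hw2, h⟩
              exact absurd hadj.symm (hedge w hwK u huA)
            · exact Or.inl (hbd ⟨hw2, u, huA.1, hadj⟩)
          refine good_node (S := (∅ : Set V)) (IH' AK i i hss1 hb1) (IH' (A \ AK) i i hss2 hb2)
            ?_ ?_ ?_ ?_ ?_ ?_ ?_
          · rw [Set.union_empty]
            exact Set.union_diff_cancel hKsub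
          · exact Set.disjoint_left.mpr fun a ha h => h.2 ha
          · simp
          · simp
          · intro u hu v hv; exact hedge u hu v hv
          · exact cardb _ i i fun w hw => Or.inl (hbd hw)
          · simp
    -- two-bag boundary case
    have PAIR : ∀ (d1 : ℕ) (i j : td.ι), td.T.dist i j ≤ d1 →
        vBoundary G A ⊆ td.bag i ∪ td.bag j → GoodDecomp G k A := by
      intro d1
      induction d1 using Nat.strong_induction_on with
      | _ d1 ihd =>
      intro i j hd hbd
      by_cases hS : A ∩ (td.bag i ∪ td.bag j) = ∅
      · have hnotbag : ∀ u ∈ A, u ∉ td.bag i ∧ u ∉ td.bag j := by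
          intro u hu
          constructor <;> intro h <;>
            exact (Set.eq_empty_iff_forall_notMem.mp hS u) ⟨hu, by simp [h]⟩
        set Aj : Set V := {u | u ∈ A ∧ ∃ b, u ∈ td.bag b ∧ Avoid td.T i b j} with hAjdef
        have hjsub : Aj ⊆ A := fun u hu => hu.1
        have htrans : ∀ u ∈ Aj, ∀ b, u ∈ td.bag b → Avoid td.T i b j := by
          intro u hu b hb
          obtain ⟨huA, b₀, hb₀, hav⟩ := hu
          exact (bag_avoid td u hb hb₀ (hnotbag u huA).1).trans hav
        have hedge : ∀ u ∈ Aj, ∀ v ∈ A \ Aj, ¬ G.Adj u v := by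
          intro u hu v hv hadj
          obtain ⟨b, hub, hvb⟩ := td.coversEdges u v hadj
          exact hv.2 ⟨hv.1, b, hvb, htrans u hu b hub⟩
        by_cases hj0 : Aj = ∅
        · -- boundary is inside a single bag
          have hbd' : vBoundary G A ⊆ td.bag i := by
            intro w hw
            obtain ⟨hwA, u, huA, hadj⟩ := hw
            by_cases hwi : w ∈ td.bag i
            · exact hwi
            rcases hbd ⟨hwA, u, huA, hadj⟩ with h | hwj
            · exact h
            exfalso
            obtain ⟨b, hub, hwb⟩ := td.coversEdges u w hadj
            have hav : Avoid td.T i b j := bag_avoid td w hwb hwj hwi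
            exact (Set.eq_empty_iff_forall_notMem.mp hj0 u) ⟨huA, b, hub, hav⟩
          refine SINGLE (td.T.dist i n₀) i le_rfl ?_ hbd'
          rw [Set.eq_empty_iff_forall_notMem]
          intro u hu
          exact (hnotbag u hu.1).1 hu.2
        · by_cases hrest : A \ Aj = ∅
          · -- Aj = A : move bag i towards j
            have hAjA : Aj = A := subset_antisymm hjsub fun u hu => by
              by_contra h
              exact (Set.eq_empty_iff_forall_notMem.mp hrest u) ⟨hu, h⟩
            have hij : i ≠ j := by
              obtain ⟨u, hu⟩ := Set.nonempty_iff_ne_empty.mpr hj0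
              obtain ⟨_, b, _, hav⟩ := hu
              exact Ne.symm hav.ne_right
            obtain ⟨c, hc_adj, hc_av, hc_lt⟩ := step_toward td.connected hij
            have hbd' : vBoundary G A ⊆ td.bag c ∪ td.bag j := by
              intro w hw
              rcases hbd hw with hwi | hwj
              · obtain ⟨hwA, u, huA, hadj⟩ := hw
                obtain ⟨b, hub, hwb⟩ := td.coversEdges u w hadj
                exact Or.inl (key_mem td w hwi hc_adj hc_av hwb
                  (htrans u (hAjA ▸ huA) b hub))
              · exact Or.inr hwj
            exact ihd (td.T.dist c j) (by omega) c j le_rfl hbd'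
          · -- both parts nonempty : split
            obtain ⟨y, hy⟩ := Set.nonempty_iff_ne_empty.mpr hrest
            obtain ⟨z, hz⟩ := Set.nonempty_iff_ne_empty.mpr hj0
            have hss1 : Aj ⊂ A :=
              (Set.ssubset_iff_of_subset hjsub).mpr ⟨y, hy.1, hy.2⟩
            have hss2 : A \ Aj ⊂ A :=
              (Set.ssubset_iff_of_subset Set.diff_subset).mpr ⟨z, hjsub hz, fun h => h.2 hz⟩
            have hb1 : vBoundary G Aj ⊆ td.bag i ∪ td.bag j := by
              intro w hw
              obtain ⟨hwA, u, huA, hadj⟩ := hw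
              by_cases hw2 : w ∈ A
              · exact absurd hadj (hedge u huA w ⟨hw2, hwA⟩)
              · exact hbd ⟨hw2, u, hjsub huA, hadj⟩
            have hb2 : vBoundary G (A \ Aj) ⊆ td.bag i ∪ td.bag i := by
              intro w hw
              obtain ⟨hwA, u, huA, hadj⟩ := hw
              by_cases hw2 : w ∈ A
              · have hwK : w ∈ Aj := by
                  by_contra h
                  exact hwA ⟨hw2, h⟩
                exact absurd hadj.symm (hedge w hwK u huA)
              by_cases hwi : w ∈ td.bag i
              · exact Or.inl hwi
              rcases hbd ⟨hw2, u, huA.1, hadj⟩ with h | hwj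
              · exact Or.inl h
              exfalso
              obtain ⟨b, hub, hwb⟩ := td.coversEdges u w hadj
              have hav : Avoid td.T i b j := bag_avoid td w hwb hwj hwi
              exact huA.2 ⟨huA.1, b, hub, hav⟩
            refine good_node (S := (∅ : Set V)) (IH' Aj i j hss1 hb1) (IH' (A \ Aj) i i hss2 hb2)
              ?_ ?_ ?_ ?_ ?_ ?_ ?_
            · rw [Set.union_empty]
              exact Set.union_diff_cancel hjsub
            · exact Set.disjoint_left.mpr fun a ha h => h.2 ha
            · simp
            · simp
            · exact hedge
            · exact cardb _ i j hbd
            · simp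
      · -- nonempty separator `A ∩ (bag i ∪ bag j)`
        obtain ⟨x, hx⟩ := Set.nonempty_iff_ne_empty.mpr hS
        have hss : A \ (td.bag i ∪ td.bag j) ⊂ A :=
          (Set.ssubset_iff_of_subset Set.diff_subset).mpr ⟨x, hx.1, fun h => h.2 hx.2⟩
        have hchild := IH' (A \ (td.bag i ∪ td.bag j)) i j hss (by
          intro w hw
          obtain ⟨hwA, u, huA, hadj⟩ := hw
          by_cases hw2 : w ∈ A
          · by_contra h
            exact hwA ⟨hw2, h⟩
          · exact hbd ⟨hw2, u, huA.1, hadj⟩)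
        refine good_node (S := A ∩ (td.bag i ∪ td.bag j)) hchild (good_empty k) ?_ ?_ ?_ ?_ ?_ ?_ ?_
        · rw [Set.union_empty]
          exact Set.diff_union_inter A (td.bag i ∪ td.bag j)
        · simp
        · exact Set.disjoint_left.mpr fun a ha h => ha.2 h.2
        · simp
        · intro u _ v hv; simp at hv
        · exact cardb _ i j hbd
        · exact cardb _ i j fun w hw => hw.2
    exact PAIR (td.T.dist i j) i j le_rfl hbound

end Build

/-- If `G` has a tree decomposition of width at most `k` (all bags of size ≤ k+1),
then `G` has a separator decomposition of width at most `3k + 3`,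
i.e. `mw(G) ≤ 3·tw(G) + 3`. -/
theorem stmt_13 {V : Type} [Fintype V] (G : SimpleGraph V) (k : ℕ)
    (td : TreeDecomp G) (hbag : ∀ i, (td.bag i).ncard ≤ k + 1) :
    ∃ t : BTree (Set V × Set V),
      IsSepDecomp G t ∧ t.label.1 = Set.univ ∧ WidthLE G (3 * k + 3) t := by
  obtain ⟨i⟩ := td.connected.nonempty
  have hb : vBoundary G (Set.univ : Set V) ⊆ td.bag i ∪ td.bag i := by
    intro w hw
    exact absurd (Set.mem_univ w) hw.1
  exact build td k hbag (Set.univ : Set V).ncard Set.univ i i le_rfl hb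
end

section
/- Let mw(G) denote the minimum width over all separator decompositions of G and tw(G) the treewidth of G. Then tw(G) ≤ 8·mw(G) − 1/3, i.e., mw(G) ≥ (1/8)·tw(G) + 1/24. -/
/-!
Index the nodes of the decomposition tree by their root paths in `List Bool` and give the node
with parts `(Vᵢ, Sᵢ)` the bag `Sᵢ ∪ ∂Vᵢ`, of size at most `2s`. A vertex `v` lies in exactly one
separator `S_m`, and `v ∈ Vₚ` exactly when `p` is an ancestor of `m`. Hence an edge `uv` with
`u ∈ S_a`, `v ∈ S_b` is covered at `a` or at `b`, and if `v ∈ ∂Vₚ` for `p ≠ m` then `v` also lies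
in the bag of the parent of `p` (it cannot lie in the sibling part, which has no edges to `Vₚ`),
so the bags containing `v` form a subtree. This gives `tw(G) ≤ 2s - 1 ≤ 8s - 1/3`.
-/

namespace SimpleGraph

variable {W : Type*} {H : SimpleGraph W}

/-- A cycle through a vertex `x` of maximal rank would give `x` two distinct neighbours of
rank at most its own. -/
theorem isAcyclic_of_unique_adj_rank_le (f : W → ℕ)
    (h : ∀ ⦃x y z⦄, H.Adj x y → H.Adj x z → f y ≤ f x → f z ≤ f x → y = z) : H.IsAcyclic := by
  classical
  intro v c hc
  obtain ⟨x, hx, hmax⟩ := c.support.toFinset.exists_max_image f ⟨v, by simp⟩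
  rw [List.mem_toFinset] at hx
  set d := c.rotate x hx
  have hd : d.IsCycle := hc.rotate hx
  have hle : ∀ y ∈ d.support, f y ≤ f x := fun y hy =>
    hmax y (List.mem_toFinset.mpr ((c.mem_support_rotate_iff x hx).mp hy))
  exact hd.snd_ne_penultimate <| h (d.adj_snd hd.not_nil) (d.adj_penultimate hd.not_nil).symm
    (hle _ (d.getVert_mem_support _)) (hle _ (d.getVert_mem_support _))

theorem induce_connected_of_exists_adj_lt {A : Set W} {m : W} (hm : m ∈ A) (f : W → ℕ)
    (h : ∀ i ∈ A, i ≠ m → ∃ j ∈ A, H.Adj i j ∧ f j < f i) : (H.induce A).Connected := by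
  have reach : ∀ i (hi : i ∈ A), (H.induce A).Reachable ⟨i, hi⟩ ⟨m, hm⟩ := by
    intro i
    induction hn : f i using Nat.strong_induction_on generalizing i with
    | _ n ih =>
      intro hi
      by_cases him : i = m
      · subst him; rfl
      obtain ⟨j, hj, hij, hlt⟩ := h i hi him
      have hadj : (H.induce A).Adj ⟨i, hi⟩ ⟨j, hj⟩ := hij
      exact hadj.reachable.trans (ih _ (hn ▸ hlt) j rfl hj)
  have : Nonempty A := ⟨⟨m, hm⟩⟩
  exact .mk fun i j => (reach i i.2).trans (reach j j.2).symm

def wordTree (α : Type*) : SimpleGraph (List α) :=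
  fromRel fun p q => p = q.dropLast

variable {α : Type*}

theorem wordTree_adj_dropLast {p : List α} (hp : p ≠ []) : (wordTree α).Adj p p.dropLast := by
  refine (fromRel_adj _ _ _).mpr ⟨fun h => ?_, Or.inr rfl⟩
  have := congrArg List.length h
  simp only [List.length_dropLast] at this
  have := List.length_pos_iff.mpr hp
  omega

theorem wordTree_connected : (wordTree α).Connected := by
  have reach : ∀ p : List α, (wordTree α).Reachable p [] := by
    intro p
    induction hn : p.length generalizing p with
    | zero => rw [List.length_eq_zero_iff.mp hn]
    | succ n ih =>
      have hp : p ≠ [] := by rintro rfl; simp at hn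
      exact (wordTree_adj_dropLast hp).reachable.trans (ih _ (by simp [hn]))
  exact .mk fun p q => (reach p).trans (reach q).symm

theorem eq_dropLast_of_wordTree_adj {p q : List α} (h : (wordTree α).Adj p q)
    (hle : q.length ≤ p.length) : q = p.dropLast := by
  obtain ⟨hne, rfl | rfl⟩ := (fromRel_adj _ _ _).mp h
  · have hq : q ≠ [] := by rintro rfl; exact hne rfl
    have := List.length_pos_iff.mpr hq
    simp only [List.length_dropLast] at hle
    omega
  · rfl

theorem wordTree_isAcyclic : (wordTree α).IsAcyclic :=
  isAcyclic_of_unique_adj_rank_le List.length fun _ _ _ hy hz hyle hzle =>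
    (eq_dropLast_of_wordTree_adj hy hyle).trans (eq_dropLast_of_wordTree_adj hz hzle).symm

end SimpleGraph

namespace BTree

variable {β : Type*}

/-- The left (`false`) or right (`true`) child. A leaf is its own child, so every word in
`List Bool` addresses a subtree. -/
def child : BTree β → Bool → BTree β
  | .leaf b, _ => .leaf b
  | .node _ l _, false => l
  | .node _ _ r, true => r

def subtreeAt (t : BTree β) (p : List Bool) : BTree β :=
  p.foldl child t

@[simp]
theorem subtreeAt_nil (t : BTree β) : t.subtreeAt [] = t := rfl

@[simp]
theorem subtreeAt_cons (t : BTree β) (x : Bool) (p : List Bool) :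
    t.subtreeAt (x :: p) = (t.child x).subtreeAt p := rfl

theorem subtreeAt_append_singleton (t : BTree β) (p : List Bool) (x : Bool) :
    t.subtreeAt (p ++ [x]) = (t.subtreeAt p).child x := by
  simp [subtreeAt]

end BTree

open SimpleGraph BTree

variable {α : Type*} {G : SimpleGraph α} {t : BTree (Set α × Set α)}

def nodeBag (G : SimpleGraph α) (t : BTree (Set α × Set α)) : Set α :=
  t.label.2 ∪ vBoundary G t.label.1

namespace IsSepDecomp

theorem child (h : IsSepDecomp G t) (x : Bool) : IsSepDecomp G (t.child x) := by
  cases t with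
  | leaf b => exact h
  | node b l r => cases x; exacts [h.1, h.2.1]

theorem subtreeAt (h : IsSepDecomp G t) (p : List Bool) : IsSepDecomp G (t.subtreeAt p) := by
  induction p generalizing t with
  | nil => exact h
  | cons x p ih => exact ih (h.child x)

theorem union_child_sep (h : IsSepDecomp G t) :
    (t.child false).label.1 ∪ (t.child true).label.1 ∪ t.label.2 = t.label.1 := by
  cases t with
  | leaf b => simp [BTree.child, BTree.label, h.1, h.2]
  | node b l r => exact h.2.2.1

theorem sep_subset (h : IsSepDecomp G t) : t.label.2 ⊆ t.label.1 :=
  h.union_child_sep ▸ Set.subset_union_right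

theorem child_subset (h : IsSepDecomp G t) (x : Bool) : (t.child x).label.1 ⊆ t.label.1 := by
  rw [← h.union_child_sep]
  cases x
  · exact Set.subset_union_left.trans Set.subset_union_left
  · exact Set.subset_union_right.trans Set.subset_union_left

theorem subtreeAt_subset (h : IsSepDecomp G t) (p : List Bool) :
    (t.subtreeAt p).label.1 ⊆ t.label.1 := by
  induction p generalizing t with
  | nil => exact subset_rfl
  | cons x p ih => exact (ih (h.child x)).trans (h.child_subset x)

theorem exists_mem_child {v : α} (h : IsSepDecomp G t) (hv : v ∈ t.label.1)
    (hS : v ∉ t.label.2) : ∃ x, v ∈ (t.child x).label.1 := by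
  rw [← h.union_child_sep] at hv
  rcases hv with (hv | hv) | hv
  exacts [⟨false, hv⟩, ⟨true, hv⟩, (hS hv).elim]

theorem disjoint_child_sep (h : IsSepDecomp G t) (x : Bool) :
    Disjoint (t.child x).label.1 t.label.2 := by
  cases t with
  | leaf b => simp [BTree.child, BTree.label, h.1]
  | node b l r => cases x; exacts [h.2.2.2.2.1, h.2.2.2.2.2.1]

theorem disjoint_child_child (h : IsSepDecomp G t) {x y : Bool} (hxy : x ≠ y) :
    Disjoint (t.child x).label.1 (t.child y).label.1 := by
  cases t with
  | leaf b => simp [BTree.child, BTree.label, h.1]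
  | node b l r =>
    cases x <;> cases y <;> first | exact (hxy rfl).elim | skip
    exacts [h.2.2.2.1, h.2.2.2.1.symm]

theorem not_adj_child (h : IsSepDecomp G t) {x y : Bool} (hxy : x ≠ y) {u v : α}
    (hu : u ∈ (t.child x).label.1) (hv : v ∈ (t.child y).label.1) : ¬ G.Adj u v := by
  cases t with
  | leaf b => simp [BTree.child, BTree.label, h.1] at hu
  | node b l r =>
    cases x <;> cases y <;> first | exact (hxy rfl).elim | skip
    exacts [h.2.2.2.2.2.2 u hu v hv, fun huv => h.2.2.2.2.2.2 v hv u hu huv.symm]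

theorem exists_mem_sep {v : α} (h : IsSepDecomp G t) (hv : v ∈ t.label.1) :
    ∃ p, v ∈ (t.subtreeAt p).label.2 := by
  induction t with
  | leaf b => simp [BTree.label, h.1] at hv
  | node b l r ihl ihr =>
    by_cases hS : v ∈ b.2
    · exact ⟨[], hS⟩
    obtain ⟨x, hx⟩ := h.exists_mem_child hv hS
    cases x
    · obtain ⟨p, hp⟩ := ihl h.1 hx
      exact ⟨false :: p, hp⟩
    · obtain ⟨p, hp⟩ := ihr h.2.1 hx
      exact ⟨true :: p, hp⟩

theorem prefix_of_mem {v : α} {p q : List Bool} (h : IsSepDecomp G t)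
    (hq : v ∈ (t.subtreeAt q).label.2) (hp : v ∈ (t.subtreeAt p).label.1) : p <+: q := by
  induction p generalizing t q with
  | nil => exact List.nil_prefix
  | cons x p ih =>
    have hx : v ∈ (t.child x).label.1 := (h.child x).subtreeAt_subset p hp
    cases q with
    | nil => exact (Set.disjoint_left.mp (h.disjoint_child_sep x) hx hq).elim
    | cons y q =>
      have hy : v ∈ (t.child y).label.1 :=
        (h.child y).subtreeAt_subset q (((h.child y).subtreeAt q).sep_subset hq)
      obtain rfl : x = y := by
        by_contra hxy
        exact Set.disjoint_left.mp (h.disjoint_child_child hxy) hx hy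
      exact List.cons_prefix_cons.mpr ⟨rfl, ih (h.child x) hq hp⟩

theorem eq_of_mem_sep {v : α} {p q : List Bool} (h : IsSepDecomp G t)
    (hp : v ∈ (t.subtreeAt p).label.2) (hq : v ∈ (t.subtreeAt q).label.2) : p = q :=
  have hpq := h.prefix_of_mem hq ((h.subtreeAt p).sep_subset hp)
  have hqp := h.prefix_of_mem hp ((h.subtreeAt q).sep_subset hq)
  hpq.eq_of_length (le_antisymm hpq.length_le hqp.length_le)

theorem vBoundary_child_subset_nodeBag (h : IsSepDecomp G t) (x : Bool) :
    vBoundary G (t.child x).label.1 ⊆ nodeBag G t := by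
  rintro v ⟨hvx, u, hu, huv⟩
  by_cases hvS : v ∈ t.label.2
  · exact Or.inl hvS
  by_cases hv : v ∈ t.label.1
  · obtain ⟨y, hy⟩ := h.exists_mem_child hv hvS
    have hxy : x ≠ y := by rintro rfl; exact hvx hy
    exact (h.not_adj_child hxy hu hy huv).elim
  · exact Or.inr ⟨hv, u, h.child_subset x hu, huv⟩

theorem exists_mem_nodeBag_of_adj {u v : α} {a b : List Bool} (h : IsSepDecomp G t)
    (hu : u ∈ (t.subtreeAt a).label.2) (hv : v ∈ (t.subtreeAt b).label.2) (huv : G.Adj u v) :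
    ∃ p, u ∈ nodeBag G (t.subtreeAt p) ∧ v ∈ nodeBag G (t.subtreeAt p) := by
  by_cases hub : u ∈ (t.subtreeAt b).label.1
  · by_cases hva : v ∈ (t.subtreeAt a).label.1
    · have hab := h.prefix_of_mem hv hva
      have hba := h.prefix_of_mem hu hub
      obtain rfl := hab.eq_of_length (le_antisymm hab.length_le hba.length_le)
      exact ⟨a, Or.inl hu, Or.inl hv⟩
    · exact ⟨a, Or.inl hu, Or.inr ⟨hva, u, (h.subtreeAt a).sep_subset hu, huv⟩⟩
  · exact ⟨b, Or.inr ⟨hub, v, (h.subtreeAt b).sep_subset hv, huv.symm⟩, Or.inl hv⟩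

theorem induce_nodeBag_connected {v : α} {m : List Bool} (h : IsSepDecomp G t)
    (hm : v ∈ (t.subtreeAt m).label.2) :
    ((wordTree Bool).induce {p | v ∈ nodeBag G (t.subtreeAt p)}).Connected := by
  refine induce_connected_of_exists_adj_lt (Or.inl hm) List.length fun p hp hpm => ?_
  have hvp : v ∈ vBoundary G (t.subtreeAt p).label.1 :=
    hp.resolve_left fun hS => hpm (h.eq_of_mem_sep hS hm)
  obtain rfl | ⟨q, x, rfl⟩ := p.eq_nil_or_concat'
  · exact (hvp.1 (h.subtreeAt_subset m ((h.subtreeAt m).sep_subset hm))).elim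
  refine ⟨q, ?_, ?_, by simp⟩
  · rw [subtreeAt_append_singleton] at hvp
    exact (h.subtreeAt q).vBoundary_child_subset_nodeBag x hvp
  · simpa using wordTree_adj_dropLast (p := q ++ [x]) (by simp)

def toTreeDecomp {α : Type} {G : SimpleGraph α} {t : BTree (Set α × Set α)}
    (h : IsSepDecomp G t) (hroot : t.label.1 = Set.univ) : TreeDecomp G where
  ι := List Bool
  T := wordTree Bool
  connected := wordTree_connected
  acyclic := wordTree_isAcyclic
  bag p := nodeBag G (t.subtreeAt p)
  covers v := by
    obtain ⟨p, hp⟩ := h.exists_mem_sep (hroot ▸ Set.mem_univ v)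
    exact ⟨p, Or.inl hp⟩
  coversEdges u v huv := by
    obtain ⟨a, ha⟩ := h.exists_mem_sep (hroot ▸ Set.mem_univ u)
    obtain ⟨b, hb⟩ := h.exists_mem_sep (hroot ▸ Set.mem_univ v)
    exact h.exists_mem_nodeBag_of_adj ha hb huv
  subtreeConn v := by
    obtain ⟨m, hm⟩ := h.exists_mem_sep (hroot ▸ Set.mem_univ v)
    exact h.induce_nodeBag_connected hm

end IsSepDecomp

namespace WidthLE

variable {s : ℕ}

theorem child (h : WidthLE G s t) (x : Bool) : WidthLE G s (t.child x) := by
  cases t with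
  | leaf b => exact h
  | node b l r => cases x; exacts [h.2.2.1, h.2.2.2]

theorem subtreeAt (h : WidthLE G s t) (p : List Bool) : WidthLE G s (t.subtreeAt p) := by
  induction p generalizing t with
  | nil => exact h
  | cons x p ih => exact ih (h.child x)

theorem ncard_nodeBag_le (h : WidthLE G s t) : (nodeBag G t).ncard ≤ 2 * s := by
  have hroot : (vBoundary G t.label.1).ncard ≤ s ∧ t.label.2.ncard ≤ s := by
    cases t with
    | leaf b => exact h
    | node b l r => exact ⟨h.1, h.2.1⟩
  have := Set.ncard_union_le t.label.2 (vBoundary G t.label.1)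
  unfold nodeBag
  omega

end WidthLE

theorem stmt_14_general {V : Type} (G : SimpleGraph V) (s : ℕ)
    (t : BTree (Set V × Set V)) (ht : IsSepDecomp G t)
    (hroot : t.label.1 = Set.univ) (hw : WidthLE G s t) :
    ∃ td : TreeDecomp G, ∀ i, ((td.bag i).ncard : ℚ) ≤ 8 * s + 2 / 3 := by
  refine ⟨ht.toTreeDecomp hroot, fun p => ?_⟩
  have hbag : ((nodeBag G (t.subtreeAt p)).ncard : ℚ) ≤ 2 * s := by
    exact_mod_cast (hw.subtreeAt p).ncard_nodeBag_le
  have : (0 : ℚ) ≤ s := s.cast_nonneg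
  change ((nodeBag G (t.subtreeAt p)).ncard : ℚ) ≤ 8 * s + 2 / 3
  linarith

/-- If `G` has a separator decomposition of width at most `s`, then `G` has a tree
decomposition of width at most `8s - 1/3` (all bags of size ≤ 8s + 2/3),
i.e. `tw(G) ≤ 8·mw(G) - 1/3`, equivalently `mw(G) ≥ tw(G)/8 + 1/24`. -/
theorem stmt_14 {V : Type} [Fintype V] (G : SimpleGraph V) (s : ℕ)
    (t : BTree (Set V × Set V)) (ht : IsSepDecomp G t)
    (hroot : t.label.1 = Set.univ) (hw : WidthLE G s t) :
    ∃ td : TreeDecomp G, ∀ i, ((td.bag i).ncard : ℚ) ≤ 8 * s + 2 / 3 :=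
  stmt_14_general G s t ht hroot hw
end
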